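/- In the sedenions, if (e_U + e_u) and (e_V + sg·e_v) are mutual zero divisors (sg ∈ {±1}), then so are their twist products (e_U + sg·e_v) and (e_V - e_u). -/

import Mathlib

/-- The iterated Cayley-Dickson double of ℝ: `CD n` is the `2^n`-ions. -/
def CD : ℕ → Type
  | 0 => ℝ
  | n + 1 => CD n × CD n

def CD.zero : (n : ℕ) → CD n
  | 0 => (0 : ℝ)
  | n + 1 => (CD.zero n, CD.zero n)

def CD.one : (n : ℕ) → CD n
  | 0 => (1 : ℝ)
  | n + 1 => (CD.one n, CD.zero n)

def CD.add : (n : ℕ) → CD n → CD n → CD n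
  | 0, x, y => (show ℝ from x) + (show ℝ from y)
  | n + 1, (a, b), (c, d) => (CD.add n a c, CD.add n b d)

def CD.neg : (n : ℕ) → CD n → CD n
  | 0, x => -(show ℝ from x)
  | n + 1, (a, b) => (CD.neg n a, CD.neg n b)

def CD.conj : (n : ℕ) → CD n → CD n
  | 0, x => x
  | n + 1, (a, b) => (CD.conj n a, CD.neg n b)

/-- Cayley-Dickson product: `(a,b)(c,d) = (ac - d* b, da + b c*)`. -/
def CD.mul : (n : ℕ) → CD n → CD n → CD n
  | 0, x, y => (show ℝ from x) * (show ℝ from y)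
  | n + 1, (a, b), (c, d) =>
      (CD.add n (CD.mul n a c) (CD.neg n (CD.mul n (CD.conj n d) b)),
       CD.add n (CD.mul n d a) (CD.mul n b (CD.conj n c)))

def CD.smul : (n : ℕ) → ℝ → CD n → CD n
  | 0, r, x => r * (show ℝ from x)
  | n + 1, r, (a, b) => (CD.smul n r a, CD.smul n r b)

/-- The imaginary/basis unit of index `i` (for `i < 2^n`). -/
def CD.e : (n : ℕ) → ℕ → CD n
  | 0, _ => (1 : ℝ)
  | n + 1, i =>
      if i < 2 ^ n then (CD.e n i, CD.zero n) else (CD.zero n, CD.e n (i - 2 ^ n))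

instance (n : ℕ) : Zero (CD n) := ⟨CD.zero n⟩
instance (n : ℕ) : One (CD n) := ⟨CD.one n⟩
instance (n : ℕ) : Add (CD n) := ⟨CD.add n⟩
instance (n : ℕ) : Neg (CD n) := ⟨CD.neg n⟩
instance (n : ℕ) : Sub (CD n) := ⟨fun x y => CD.add n x (CD.neg n y)⟩
instance (n : ℕ) : Mul (CD n) := ⟨CD.mul n⟩
instance (n : ℕ) : SMul ℝ (CD n) := ⟨CD.smul n⟩

def CDZ : ℕ → Type
  | 0 => ℤ
  | n + 1 => CDZ n × CDZ n

instance CDZ.decEq : (n : ℕ) → DecidableEq (CDZ n)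
  | 0 => inferInstanceAs (DecidableEq ℤ)
  | n + 1 => @instDecidableEqProd _ _ (CDZ.decEq n) (CDZ.decEq n)

def CDZ.zero : (n : ℕ) → CDZ n
  | 0 => (0 : ℤ)
  | n + 1 => (CDZ.zero n, CDZ.zero n)

def CDZ.add : (n : ℕ) → CDZ n → CDZ n → CDZ n
  | 0, x, y => (show ℤ from x) + (show ℤ from y)
  | n + 1, (a, b), (c, d) => (CDZ.add n a c, CDZ.add n b d)

def CDZ.neg : (n : ℕ) → CDZ n → CDZ n
  | 0, x => -(show ℤ from x)
  | n + 1, (a, b) => (CDZ.neg n a, CDZ.neg n b)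

def CDZ.conj : (n : ℕ) → CDZ n → CDZ n
  | 0, x => x
  | n + 1, (a, b) => (CDZ.conj n a, CDZ.neg n b)

def CDZ.mul : (n : ℕ) → CDZ n → CDZ n → CDZ n
  | 0, x, y => (show ℤ from x) * (show ℤ from y)
  | n + 1, (a, b), (c, d) =>
      (CDZ.add n (CDZ.mul n a c) (CDZ.neg n (CDZ.mul n (CDZ.conj n d) b)),
       CDZ.add n (CDZ.mul n d a) (CDZ.mul n b (CDZ.conj n c)))

def CDZ.smul : (n : ℕ) → ℤ → CDZ n → CDZ n
  | 0, r, x => r * (show ℤ from x)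
  | n + 1, r, (a, b) => (CDZ.smul n r a, CDZ.smul n r b)

def CDZ.e : (n : ℕ) → ℕ → CDZ n
  | 0, _ => (1 : ℤ)
  | n + 1, i =>
      if i < 2 ^ n then (CDZ.e n i, CDZ.zero n) else (CDZ.zero n, CDZ.e n (i - 2 ^ n))


def CDZ.toCD : (n : ℕ) → CDZ n → CD n
  | 0, x => ((show ℤ from x : ℤ) : ℝ)
  | n + 1, (a, b) => (CDZ.toCD n a, CDZ.toCD n b)

theorem CDZ.toCD_inj : ∀ (n : ℕ) (x y : CDZ n), CDZ.toCD n x = CDZ.toCD n y → x = y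
  | 0, x, y, h => by
      simp only [CDZ.toCD] at h
      exact (Int.cast_injective (α := ℝ)) h
  | n + 1, (a, b), (c, d), h => by
      injection h with h1 h2
      exact Prod.ext (CDZ.toCD_inj n a c h1) (CDZ.toCD_inj n b d h2)

theorem CDZ.toCD_zero : ∀ (n : ℕ), CDZ.toCD n (CDZ.zero n) = CD.zero n
  | 0 => by simp [CDZ.toCD, CDZ.zero, CD.zero]; rfl
  | n + 1 => by simp [CDZ.toCD, CDZ.zero, CD.zero, CDZ.toCD_zero n]; rfl

theorem CDZ.toCD_add : ∀ (n : ℕ) (x y : CDZ n),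
    CDZ.toCD n (CDZ.add n x y) = CD.add n (CDZ.toCD n x) (CDZ.toCD n y)
  | 0, x, y => by simp [CDZ.toCD, CDZ.add, CD.add]; exact Int.cast_add (R := ℝ) _ _
  | n + 1, (a, b), (c, d) => by
      simp [CDZ.toCD, CDZ.add, CD.add, CDZ.toCD_add n]; rfl

theorem CDZ.toCD_neg : ∀ (n : ℕ) (x : CDZ n),
    CDZ.toCD n (CDZ.neg n x) = CD.neg n (CDZ.toCD n x)
  | 0, x => by simp [CDZ.toCD, CDZ.neg, CD.neg]; exact Int.cast_neg (R := ℝ) _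
  | n + 1, (a, b) => by simp [CDZ.toCD, CDZ.neg, CD.neg, CDZ.toCD_neg n]; rfl

theorem CDZ.toCD_conj : ∀ (n : ℕ) (x : CDZ n),
    CDZ.toCD n (CDZ.conj n x) = CD.conj n (CDZ.toCD n x)
  | 0, x => rfl
  | n + 1, (a, b) => by
      simp [CDZ.toCD, CDZ.conj, CD.conj, CDZ.toCD_conj n, CDZ.toCD_neg n]; rfl

theorem CDZ.toCD_mul : ∀ (n : ℕ) (x y : CDZ n),
    CDZ.toCD n (CDZ.mul n x y) = CD.mul n (CDZ.toCD n x) (CDZ.toCD n y)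
  | 0, x, y => by simp [CDZ.toCD, CDZ.mul, CD.mul]; exact Int.cast_mul (α := ℝ) _ _
  | n + 1, (a, b), (c, d) => by
      simp [CDZ.toCD, CDZ.mul, CD.mul, CDZ.toCD_add n, CDZ.toCD_neg n,
        CDZ.toCD_conj n, CDZ.toCD_mul n]; rfl

theorem CDZ.toCD_smul : ∀ (n : ℕ) (r : ℤ) (x : CDZ n),
    CDZ.toCD n (CDZ.smul n r x) = CD.smul n (r : ℝ) (CDZ.toCD n x)
  | 0, r, x => by simp [CDZ.toCD, CDZ.smul, CD.smul]; exact Int.cast_mul (α := ℝ) _ _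
  | n + 1, r, (a, b) => by simp [CDZ.toCD, CDZ.smul, CD.smul, CDZ.toCD_smul n]; rfl

theorem CDZ.toCD_e : ∀ (n i : ℕ), CDZ.toCD n (CDZ.e n i) = CD.e n i
  | 0, i => by simp [CDZ.toCD, CDZ.e, CD.e]; rfl
  | n + 1, i => by
      by_cases h : i < 2 ^ n
      · have h1 : CDZ.e (n + 1) i = (CDZ.e n i, CDZ.zero n) := if_pos h
        have h2 : CD.e (n + 1) i = (CD.e n i, CD.zero n) := if_pos h
        rw [h1, h2]; exact congrArg₂ Prod.mk (CDZ.toCD_e n i) (CDZ.toCD_zero n)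
      · have h1 : CDZ.e (n + 1) i = (CDZ.zero n, CDZ.e n (i - 2 ^ n)) := if_neg h
        have h2 : CD.e (n + 1) i = (CD.zero n, CD.e n (i - 2 ^ n)) := if_neg h
        rw [h1, h2]; exact congrArg₂ Prod.mk (CDZ.toCD_zero n) (CDZ.toCD_e n _)

set_option synthInstance.maxSize 2000 in
set_option maxHeartbeats 2000000 in
theorem CDZ.key : ∀ u < 8, ∀ v < 8, ∀ U < 16, ∀ V < 16, ∀ ε : Bool,
    (0 < u ∧ 0 < v ∧ u ≠ v ∧ 8 ≤ U ∧ 8 ≤ V ∧ u ^^^ U = v ^^^ V) →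
    (CDZ.mul 4 (CDZ.add 4 (CDZ.e 4 U) (CDZ.e 4 u))
        (CDZ.add 4 (CDZ.e 4 V) (CDZ.smul 4 (cond ε 1 (-1)) (CDZ.e 4 v))) = CDZ.zero 4 →
     CDZ.mul 4 (CDZ.add 4 (CDZ.e 4 U) (CDZ.smul 4 (cond ε 1 (-1)) (CDZ.e 4 v)))
        (CDZ.add 4 (CDZ.e 4 V) (CDZ.neg 4 (CDZ.e 4 u))) = CDZ.zero 4) := by decide

/-- Paper's Theorem 6 (twist products, in the sedenions `CD 4`): if `(e_U + e_u)` and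
`(e_V + sg e_v)` are mutual zero divisors (`sg = ±1`), then so are their twist
products `(e_U + sg e_v)` and `(e_V - e_u)`. -/
theorem twist_product (u U v V : ℕ)
    (hu : 0 < u) (hu8 : u < 8) (hv : 0 < v) (hv8 : v < 8) (huv : u ≠ v)
    (hU : 8 ≤ U) (hU16 : U < 16) (hV : 8 ≤ V) (hV16 : V < 16)
    (hxor : u ^^^ U = v ^^^ V)
    (sg : ℝ) (hsg : sg = 1 ∨ sg = -1)
    (hzero : (CD.e 4 U + CD.e 4 u) * (CD.e 4 V + sg • CD.e 4 v) = 0) :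
    (CD.e 4 U + sg • CD.e 4 v) * (CD.e 4 V - CD.e 4 u) = 0 := by
  obtain ⟨ε, s, hs, rfl⟩ : ∃ (ε : Bool) (s : ℤ),
      s = (cond ε 1 (-1) : ℤ) ∧ sg = (s : ℝ) := by
    rcases hsg with h | h
    · exact ⟨true, 1, rfl, by simp [h]⟩
    · exact ⟨false, -1, rfl, by simp [h]⟩
  have key := CDZ.key u hu8 v hv8 U hU16 V hV16 ε ⟨hu, hv, huv, hU, hV, hxor⟩
  simp only [← hs] at key
  have hmap : ∀ (x : CDZ 4), x = CDZ.zero 4 → CDZ.toCD 4 x = (0 : CD 4) := by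
    rintro x rfl; exact CDZ.toCD_zero 4
  have e1 : (CD.e 4 U + CD.e 4 u) * (CD.e 4 V + (s : ℝ) • CD.e 4 v)
      = CDZ.toCD 4 (CDZ.mul 4 (CDZ.add 4 (CDZ.e 4 U) (CDZ.e 4 u))
        (CDZ.add 4 (CDZ.e 4 V) (CDZ.smul 4 s (CDZ.e 4 v)))) := by
    simp only [CDZ.toCD_mul, CDZ.toCD_add, CDZ.toCD_smul, CDZ.toCD_e]
    rfl
  have e2 : (CD.e 4 U + (s : ℝ) • CD.e 4 v) * (CD.e 4 V - CD.e 4 u)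
      = CDZ.toCD 4 (CDZ.mul 4 (CDZ.add 4 (CDZ.e 4 U) (CDZ.smul 4 s (CDZ.e 4 v)))
        (CDZ.add 4 (CDZ.e 4 V) (CDZ.neg 4 (CDZ.e 4 u)))) := by
    simp only [CDZ.toCD_mul, CDZ.toCD_add, CDZ.toCD_smul, CDZ.toCD_neg, CDZ.toCD_e]
    rfl
  rw [e1] at hzero
  have h0 : (0 : CD 4) = CDZ.toCD 4 (CDZ.zero 4) := (CDZ.toCD_zero 4).symm
  rw [h0] at hzero
  have := CDZ.toCD_inj 4 _ _ hzero
  rw [e2]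
  exact hmap _ (key this)
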